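/- arXiv:1909.04794 — 2 statements merged into one kernel-verified Lean document; each statement's English description precedes it below -/
import Mathlib

section
/- For n > 0 and positive integers β, γ: ∑_{k=0}^n (-1)^n * (k/n) * C((1-β)n, n-k) * C(-γ, k) = γ/(βn+γ) * C(βn+γ, n), where C(x,m) denotes the generalized binomial coefficient (this is the α = 0 specialization of the inverse relation, evaluated via Vandermonde's convolution). -/
/-!
Absorption, `k * C(-γ, k) = -γ * C(-γ - 1, k - 1)`, turns the weighted sum into a Vandermonde
convolution equal to `-γ * C((1 - β) n - γ - 1, n - 1)`. Upper negation rewrites this as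
`(-1)^(n-1) * (-γ) * C(βn + γ - 1, n - 1)`, and absorption once more gives
`C(βn + γ - 1, n - 1) = n / (βn + γ) * C(βn + γ, n)`.
-/

open Finset

namespace Ring

variable {R : Type*} [CommRing R] [BinomialRing R]

theorem succ_nsmul_choose_succ (r : R) (k : ℕ) :
    (k + 1) • choose r (k + 1) = r * choose (r - 1) k := by
  simpa [choose_one_right] using choose_smul_choose r (Nat.le_add_left 1 k)

theorem choose_neg_eq_neg_one_pow_mul (r : R) (n : ℕ) :
    choose (-r) n = (-1) ^ n * choose (r + n - 1) n := by
  rw [choose_neg, Units.smul_def, Int.coe_negOnePow_natCast, zsmul_eq_mul]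
  push_cast
  ring

theorem sum_range_nsmul_choose_mul_choose (x y : R) (n : ℕ) :
    ∑ k ∈ range (n + 2), k • (choose x (n + 1 - k) * choose y k) =
      y * choose (x + y - 1) n := by
  have hvdm : choose (y - 1 + x) n = ∑ i ∈ range (n + 1), choose (y - 1) i * choose x (n - i) :=
    (add_choose_eq n (Commute.all _ _)).trans (Nat.sum_antidiagonal_eq_sum_range_succ_mk _ n)
  rw [sum_range_succ', zero_smul, add_zero, show x + y - 1 = y - 1 + x by abel, hvdm, mul_sum]
  refine sum_congr rfl fun i _ => ?_
  rw [Nat.add_sub_add_right, ← mul_smul_comm, succ_nsmul_choose_succ]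
  ring

theorem choose_succ_eq_mul_choose_div {K : Type*} [Field K] [CharZero K] [BinomialRing K]
    (r : K) (k : ℕ) : choose r (k + 1) = r * choose (r - 1) k / (k + 1) := by
  rw [← succ_nsmul_choose_succ, nsmul_eq_mul]
  field_simp
  push_cast
  ring

end Ring

theorem stmt_7_general (n β γ : ℕ) (hn : 0 < n) (hγ : 0 < γ) :
    ∑ k ∈ Finset.range (n + 1),
      (-1 : ℚ) ^ n * ((k : ℚ) / n) * Ring.choose (((1 : ℚ) - β) * n) (n - k) *
        Ring.choose (-(γ : ℚ)) k
      = ((γ : ℚ) / (β * n + γ)) * ((β * n + γ).choose n) := by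
  obtain ⟨m, rfl⟩ : ∃ m, n = m + 1 := ⟨n - 1, by omega⟩
  have hN : (β * (m + 1) + γ : ℚ) ≠ 0 := by positivity
  have hneg : Ring.choose ((1 - β) * (m + 1) + -γ - 1 : ℚ) m =
      (-1) ^ m * Ring.choose (β * (m + 1) + γ - 1 : ℚ) m := by
    rw [← neg_neg ((1 - β) * (m + 1) + -γ - 1 : ℚ), Ring.choose_neg_eq_neg_one_pow_mul]
    ring_nf
  have hsign : (-1 : ℚ) ^ (m + 1) * (-1) ^ m = -1 := by
    rw [← pow_add]
    exact Odd.neg_one_pow ⟨m, by ring⟩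
  rw [← Ring.choose_natCast]
  push_cast
  calc
    _ = (-1) ^ (m + 1) / (m + 1 : ℚ) * ∑ k ∈ range (m + 2),
          k • (Ring.choose ((1 - β) * (m + 1) : ℚ) (m + 1 - k) * Ring.choose (-γ : ℚ) k) := by
      rw [mul_sum]
      refine sum_congr rfl fun k _ => ?_
      rw [nsmul_eq_mul]
      ring
    _ = γ / (m + 1) * Ring.choose (β * (m + 1) + γ - 1 : ℚ) m := by
      rw [Ring.sum_range_nsmul_choose_mul_choose, hneg]
      linear_combination (-γ / (m + 1) * Ring.choose (β * (m + 1) + γ - 1 : ℚ) m) * hsign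
    _ = _ := by
      rw [Ring.choose_succ_eq_mul_choose_div]
      field_simp

theorem stmt_7 (n β γ : ℕ) (hn : 0 < n) (hβ : 0 < β) (hγ : 0 < γ) :
    ∑ k ∈ Finset.range (n + 1),
      (-1 : ℚ) ^ n * ((k : ℚ) / n) * Ring.choose (((1 : ℚ) - β) * n) (n - k) *
        Ring.choose (-(γ : ℚ)) k
      = ((γ : ℚ) / (β * n + γ)) * ((β * n + γ).choose n) :=
  stmt_7_general n β γ hn hγ
end

section
/- Over ℚ (or any commutative ring containing ℚ), the formal power series identity C_{β,α₁+α₂}(x) = C_{β,α₁}(x) · C_{β,α₂}(x) holds for positive integers β, α₁, α₂, where C_{β,γ}(x) = ∑_{n≥0} (γ/(βn+γ)) C(βn+γ, n) x^n. -/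
/-!
Fix `α`. Both `γ ↦ C_{β,α+γ}` and `γ ↦ C_{β,α} C_{β,γ}` satisfy the recurrence
`f (γ + 1) = f γ + x f (γ + β)`: for the first family this is Pascal's rule combined with the
absorption identity `(m + 1) C(m, n) = (n + 1) C(m + 1, n + 1)`, and the second inherits it from the
first at `α = 0`. Both families take the value `C_{β,α}` at `γ = 0`, and the recurrence determines a
family from its value at `0`, by induction on the coefficient index and then on `γ`.
-/

/-- The generating function of the generalized Catalan numbers. -/
noncomputable def genCatalanSeries (β γ : ℕ) : PowerSeries ℚ :=
  PowerSeries.mk fun n => ((γ : ℚ) / (β * n + γ)) * ((β * n + γ).choose n)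

open PowerSeries

theorem PowerSeries.eq_of_add_one_eq_add_X_mul {R : Type*} [Semiring R] (β : ℕ)
    {f g : ℕ → R⟦X⟧} (hf : ∀ γ, f (γ + 1) = f γ + X * f (γ + β))
    (hg : ∀ γ, g (γ + 1) = g γ + X * g (γ + β)) (h₀ : f 0 = g 0) : f = g := by
  suffices h : ∀ n γ, coeff n (f γ) = coeff n (g γ) from
    funext fun γ => ext fun n => h n γ
  intro n
  induction n with
  | zero =>
    intro γ
    induction γ with
    | zero => rw [h₀]
    | succ γ ih => rw [hf, hg, map_add, map_add, coeff_zero_X_mul, coeff_zero_X_mul, ih]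
  | succ n ihn =>
    intro γ
    induction γ with
    | zero => rw [h₀]
    | succ γ ih => rw [hf, hg, map_add, map_add, coeff_succ_X_mul, coeff_succ_X_mul, ih, ihn]

theorem coeff_genCatalanSeries (β γ n : ℕ) :
    coeff n (genCatalanSeries β γ) = (γ : ℚ) / (β * n + γ) * (β * n + γ).choose n :=
  coeff_mk _ _

theorem genCatalanSeries_zero_right (β : ℕ) : genCatalanSeries β 0 = 0 := by
  ext n
  simp [coeff_genCatalanSeries]

theorem constantCoeff_genCatalanSeries {β γ : ℕ} (hγ : γ ≠ 0) :
    constantCoeff (genCatalanSeries β γ) = 1 := by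
  simp [← coeff_zero_eq_constantCoeff_apply, coeff_genCatalanSeries, hγ]

theorem coeff_succ_genCatalanSeries_add_one (β γ n : ℕ) (h : γ + β ≠ 0) :
    coeff (n + 1) (genCatalanSeries β (γ + 1)) =
      coeff (n + 1) (genCatalanSeries β γ) + coeff n (genCatalanSeries β (γ + β)) := by
  obtain ⟨m, hm⟩ : ∃ m, β * n + γ + β = m := ⟨_, rfl⟩
  have hmq : (β : ℚ) * n + γ + β = m := by exact_mod_cast hm
  have hm₀ : (m : ℚ) ≠ 0 := by exact_mod_cast (show m ≠ 0 by lia)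
  have pascal : ((m + 1).choose (n + 1) : ℚ) = m.choose n + m.choose (n + 1) := by
    exact_mod_cast Nat.choose_succ_succ m n
  have absorb : ((m : ℚ) + 1) * m.choose n = (m + 1).choose (n + 1) * (n + 1) := by
    exact_mod_cast Nat.add_one_mul_choose_eq m n
  simp only [coeff_genCatalanSeries]
  rw [show β * (n + 1) + (γ + 1) = m + 1 by lia, show β * (n + 1) + γ = m by lia,
    show β * n + (γ + β) = m by lia]
  push_cast
  rw [show (β : ℚ) * (n + 1) + (γ + 1) = m + 1 by rw [← hmq]; ring,
    show (β : ℚ) * (n + 1) + γ = m by rw [← hmq]; ring,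
    show (β : ℚ) * n + (γ + β) = m by rw [← hmq]; ring]
  rw [pascal] at absorb ⊢
  field_simp
  rw [← hmq] at absorb ⊢
  linear_combination -β * absorb

/-- `C_{β,γ}` also at `γ = 0`, where the constant coefficient of `genCatalanSeries β 0` is the junk
value `0 / 0 = 0` instead of `1`. -/
noncomputable def genCatalanSeries' (β γ : ℕ) : ℚ⟦X⟧ :=
  mk fun n => if n = 0 then 1 else coeff n (genCatalanSeries β γ)

theorem genCatalanSeries'_of_ne_zero {β γ : ℕ} (hγ : γ ≠ 0) :
    genCatalanSeries' β γ = genCatalanSeries β γ := by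
  ext (_ | n)
  · simp [genCatalanSeries', constantCoeff_genCatalanSeries hγ]
  · simp [genCatalanSeries']

theorem genCatalanSeries'_zero_right (β : ℕ) : genCatalanSeries' β 0 = 1 := by
  ext (_ | n) <;> simp [genCatalanSeries', genCatalanSeries_zero_right]

theorem genCatalanSeries'_add_one (β γ : ℕ) :
    genCatalanSeries' β (γ + 1) = genCatalanSeries' β γ + X * genCatalanSeries' β (γ + β) := by
  rcases eq_or_ne (γ + β) 0 with h | h
  · obtain ⟨rfl, rfl⟩ : γ = 0 ∧ β = 0 := by lia
    ext (_ | _ | n) <;> simp [genCatalanSeries', coeff_genCatalanSeries, Nat.choose_eq_zero_of_lt]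
  rw [genCatalanSeries'_of_ne_zero h]
  ext (_ | n)
  · simp [genCatalanSeries']
  · simp [genCatalanSeries', coeff_succ_X_mul, coeff_succ_genCatalanSeries_add_one β γ n h]

theorem genCatalanSeries'_add (β α γ : ℕ) :
    genCatalanSeries' β (α + γ) = genCatalanSeries' β α * genCatalanSeries' β γ := by
  have h := eq_of_add_one_eq_add_X_mul β (f := fun γ => genCatalanSeries' β (α + γ))
    (g := fun γ => genCatalanSeries' β α * genCatalanSeries' β γ)
    (fun γ => by simp only [← add_assoc, genCatalanSeries'_add_one])
    (fun γ => by rw [genCatalanSeries'_add_one, mul_add, mul_left_comm])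
    (by rw [add_zero, genCatalanSeries'_zero_right, mul_one])
  exact congrFun h γ

theorem stmt_13_general (β α₁ α₂ : ℕ) (h₁ : 0 < α₁) (h₂ : 0 < α₂) :
    genCatalanSeries β (α₁ + α₂) = genCatalanSeries β α₁ * genCatalanSeries β α₂ := by
  rw [← genCatalanSeries'_of_ne_zero (by lia : α₁ + α₂ ≠ 0),
    ← genCatalanSeries'_of_ne_zero h₁.ne', ← genCatalanSeries'_of_ne_zero h₂.ne']
  exact genCatalanSeries'_add β α₁ α₂

theorem stmt_13 (β α₁ α₂ : ℕ) (hβ : 0 < β) (h₁ : 0 < α₁) (h₂ : 0 < α₂) :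
    genCatalanSeries β (α₁ + α₂) = genCatalanSeries β α₁ * genCatalanSeries β α₂ :=
  stmt_13_general β α₁ α₂ h₁ h₂
end
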